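/- For every n ≥ 2, (n−1)·R_n = (1/2)·Σ_{ℓ=1}^{n−1} R_ℓ ▷_Sym R_{n−ℓ} in T(ℝ^d) ⊗ T(ℝ^d). Consequently, for every n ≥ 1 the element R_n lies in the smallest linear subspace of T ⊗ T that contains the elements i ⊗ i for all letters i ∈ {1,…,d} and is closed under the operation ▷_Sym. -/

import Mathlib

open scoped TensorProduct

set_option maxSynthPendingDepth 3

noncomputable section

abbrev Word (d : ℕ) := List (Fin d)
abbrev Ten (d : ℕ) := Word d →₀ ℝ

variable {d : ℕ}

def wd (w : Word d) : Ten d := Finsupp.single w 1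

def lift2 (f : Word d → Word d → Ten d) : Ten d →ₗ[ℝ] Ten d →ₗ[ℝ] Ten d :=
  Finsupp.lsum ℝ fun u => LinearMap.toSpanSingleton ℝ (Ten d →ₗ[ℝ] Ten d)
    (Finsupp.lsum ℝ fun v => LinearMap.toSpanSingleton ℝ (Ten d) (f u v))

def shR : Word d → Word d → Ten d
  | [], v => wd v.reverse
  | a :: u, [] => wd (a :: u).reverse
  | a :: u, b :: v =>
      Finsupp.mapDomain (fun w => w ++ [a]) (shR u (b :: v)) +
        Finsupp.mapDomain (fun w => w ++ [b]) (shR (a :: u) v)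
termination_by u v => u.length + v.length

def shW (u v : Word d) : Ten d := shR u.reverse v.reverse

def shuffle : Ten d →ₗ[ℝ] Ten d →ₗ[ℝ] Ten d := lift2 shW

def hsW (u v : Word d) : Ten d :=
  match v.getLast? with
  | none => 0
  | some b => Finsupp.mapDomain (fun w => w ++ [b]) (shW u v.dropLast)

def halfSh : Ten d →ₗ[ℝ] Ten d →ₗ[ℝ] Ten d := lift2 hsW

def areaOp (x y : Ten d) : Ten d := halfSh x y - halfSh y x

def concW (u v : Word d) : Ten d := wd (u ++ v)

def concM : Ten d →ₗ[ℝ] Ten d →ₗ[ℝ] Ten d := lift2 concW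

def brk (x y : Ten d) : Ten d := concM x y - concM y x

/-- `X` generates the shuffle algebra: the smallest unital ⧢-subalgebra containing `X` is all. -/
def ShuffleGen (X : Set (Ten d)) : Prop :=
  ∀ p : Submodule ℝ (Ten d), wd ([] : Word d) ∈ p → X ⊆ ↑p →
    (∀ x ∈ p, ∀ y ∈ p, shuffle x y ∈ p) → ∀ z : Ten d, z ∈ p

def shPow (x : Ten d) : ℕ → Ten d
  | 0 => wd []
  | n + 1 => shuffle x (shPow x n)

def monEval (X : Set (Ten d)) (m : ↥X →₀ ℕ) : Ten d :=
  (m.support.toList.map fun v : ↥X => shPow (v : Ten d) (m v)).foldr (fun a b => shuffle a b) (wd [])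

def polyEval (X : Set (Ten d)) (p : MvPolynomial (↥X) ℝ) : Ten d :=
  ∑ m ∈ p.support, MvPolynomial.coeff m p • monEval X m

/-- `X` freely generates the shuffle algebra. -/
def FreeShuffleGen (X : Set (Ten d)) : Prop :=
  ShuffleGen X ∧ Function.Bijective (polyEval (d := d) X)

/-- Homogeneous component of degree `n`. -/
def Tn (d n : ℕ) : Submodule ℝ (Ten d) :=
  Submodule.span ℝ {x | ∃ w : Word d, w.length = n ∧ x = wd w}

/-- The free Lie algebra: smallest subspace containing the letters, closed under bracket. -/
def freeLie (d : ℕ) : Submodule ℝ (Ten d) :=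
  sInf {p | (∀ i : Fin d, wd [i] ∈ p) ∧ ∀ x ∈ p, ∀ y ∈ p, brk x y ∈ p}

/-- Pairing making the words orthonormal. -/
def pairT (x y : Ten d) : ℝ := x.sum fun w c => c * y w

/-- Smallest subspace containing the letters, closed under area. -/
def areaCl (d : ℕ) : Submodule ℝ (Ten d) :=
  sInf {p | (∀ i : Fin d, wd [i] ∈ p) ∧ ∀ x ∈ p, ∀ y ∈ p, areaOp x y ∈ p}

def rhoW : Word d → Ten d
  | [] => 0
  | [i] => wd [i]
  | i :: j :: u =>
      concM (wd [i]) (rhoW (j :: u)) -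
        concM (wd [(j :: u).getLast (by simp)]) (rhoW (i :: (j :: u).dropLast))
termination_by w => w.length
decreasing_by
  · simp
  · simp [List.length_dropLast]

def rhoMap : Ten d →ₗ[ℝ] Ten d :=
  Finsupp.lsum ℝ fun w => LinearMap.toSpanSingleton ℝ (Ten d) (rhoW w)

/-- Right-bracketing (Dynkin) map on words. -/
def rW : Word d → Ten d
  | [] => 0
  | [i] => wd [i]
  | i :: j :: u => brk (wd [i]) (rW (j :: u))

def rMap : Ten d →ₗ[ℝ] Ten d :=
  Finsupp.lsum ℝ fun w => LinearMap.toSpanSingleton ℝ (Ten d) (rW w)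

def wordsLen (d n : ℕ) : Finset (Word d) :=
  (Finset.univ : Finset (Fin n → Fin d)).image List.ofFn

def Rtens (d n : ℕ) : Ten d ⊗[ℝ] Ten d :=
  ∑ w ∈ wordsLen d n, wd w ⊗ₜ[ℝ] rW w

def top2 (f g : Ten d →ₗ[ℝ] Ten d →ₗ[ℝ] Ten d) :
    Ten d ⊗[ℝ] Ten d →ₗ[ℝ] Ten d ⊗[ℝ] Ten d →ₗ[ℝ] Ten d ⊗[ℝ] Ten d :=
  TensorProduct.lift
    (((TensorProduct.mapBilinear (σ₁₂ := RingHom.id ℝ) (M := Ten d) (N := Ten d) (M₂ := Ten d) (N₂ := Ten d)).comp f).compl₂ g)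

def brkL : Ten d →ₗ[ℝ] Ten d →ₗ[ℝ] Ten d := concM (d := d) - (concM (d := d)).flip

def areaL : Ten d →ₗ[ℝ] Ten d →ₗ[ℝ] Ten d := halfSh (d := d) - (halfSh (d := d)).flip

/-- The ▷ operation on the tensor square. -/
def rop : Ten d ⊗[ℝ] Ten d →ₗ[ℝ] Ten d ⊗[ℝ] Ten d →ₗ[ℝ] Ten d ⊗[ℝ] Ten d :=
  top2 halfSh brkL

/-- The symmetrized operation ▷_Sym. -/
def ropSym : Ten d ⊗[ℝ] Ten d →ₗ[ℝ] Ten d ⊗[ℝ] Ten d →ₗ[ℝ] Ten d ⊗[ℝ] Ten d :=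
  top2 areaL brkL

/-- The ■ product: shuffle on the left, concatenation on the right. -/
def bop : Ten d ⊗[ℝ] Ten d →ₗ[ℝ] Ten d ⊗[ℝ] Ten d →ₗ[ℝ] Ten d ⊗[ℝ] Ten d :=
  top2 shuffle concM

/-- Labelled binary trees over the alphabet. -/
inductive LTree (d : ℕ) : Type
  | leaf : Fin d → LTree d
  | node : LTree d → LTree d → LTree d

def leavesT : LTree d → ℕ
  | .leaf _ => 1
  | .node a b => leavesT a + leavesT b

def areaT : LTree d → Ten d
  | .leaf i => wd [i]
  | .node a b => areaOp (areaT a) (areaT b)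

def lieT : LTree d → Ten d
  | .leaf i => wd [i]
  | .node a b => brk (lieT a) (lieT b)

def cT : LTree d → ℕ
  | .leaf _ => 1
  | .node a b => 2 * cT a * cT b * (leavesT a + leavesT b - 1)

/-- The smallest linear subspace of `T ⊗ T` containing the `i ⊗ i` for letters `i`
and closed under `▷_Sym`. -/
def frakR (d : ℕ) : Submodule ℝ (Ten d ⊗[ℝ] Ten d) :=
  sInf {p | (∀ i : Fin d, (wd [i] ⊗ₜ[ℝ] wd [i]) ∈ p) ∧
    ∀ x ∈ p, ∀ y ∈ p, ropSym x y ∈ p}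


section AuxLemmas

variable {d : ℕ}

lemma lift2_wd (f : Word d → Word d → Ten d) (u v : Word d) :
    lift2 f (wd u) (wd v) = f u v := by
  simp [lift2, wd, Finsupp.lsum_single, LinearMap.toSpanSingleton_apply]

def Ra (a : Fin d) : Ten d →ₗ[ℝ] Ten d := Finsupp.lmapDomain ℝ ℝ (fun w => w ++ [a])
def La (a : Fin d) : Ten d →ₗ[ℝ] Ten d := Finsupp.lmapDomain ℝ ℝ (fun w => a :: w)

lemma Ra_wd (a : Fin d) (w : Word d) : Ra a (wd w) = wd (w ++ [a]) := by
  simp [Ra, wd, Finsupp.mapDomain_single]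

lemma La_wd (a : Fin d) (w : Word d) : La a (wd w) = wd (a :: w) := by
  simp [La, wd, Finsupp.mapDomain_single]

lemma shW_nil_left (v : Word d) : shW [] v = wd v := by
  rw [shW, List.reverse_nil, shR.eq_1, List.reverse_reverse]

lemma shW_nil_right (u : Word d) : shW u [] = wd u := by
  rw [shW, List.reverse_nil]
  rcases h : u.reverse with _ | ⟨a, u'⟩
  · rw [shR.eq_1, ← h, List.reverse_reverse]
  · rw [shR.eq_2, ← h, List.reverse_reverse]

lemma shW_app_app (u v : Word d) (a b : Fin d) :
    shW (u ++ [a]) (v ++ [b]) =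
      Ra a (shW u (v ++ [b])) + Ra b (shW (u ++ [a]) v) := by
  rw [shW, shW, shW]
  simp only [List.reverse_append, List.reverse_cons, List.reverse_nil, List.nil_append,
    List.cons_append, List.singleton_append]
  rw [shR.eq_3]
  simp [Ra, Finsupp.lmapDomain_apply]

lemma hsW_nil_right (u : Word d) : hsW u [] = 0 := rfl

lemma hsW_app (u v : Word d) (b : Fin d) : hsW u (v ++ [b]) = Ra b (shW u v) := by
  rw [hsW]
  simp [List.getLast?_concat, List.dropLast_concat, Ra, Finsupp.lmapDomain_apply]

lemma rW_cons (a : Fin d) (w : Word d) (h : w ≠ []) :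
    rW (a :: w) = brk (wd [a]) (rW w) := by
  cases w with
  | nil => exact absurd rfl h
  | cons j u => rfl

lemma rMap_wd (w : Word d) : rMap (wd w) = rW w := by
  simp [rMap, wd, Finsupp.lsum_single]

lemma concM_wd (u v : Word d) : concM (wd u) (wd v) = wd (u ++ v) := by
  rw [concM, lift2_wd, concW]

lemma mem_wordsLen {w : Word d} {n : ℕ} : w ∈ wordsLen d n ↔ w.length = n := by
  constructor
  · intro hw
    simp only [wordsLen, Finset.mem_image, Finset.mem_univ, true_and] at hw
    obtain ⟨f, rfl⟩ := hw
    simp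
  · intro h
    subst h
    simp only [wordsLen, Finset.mem_image, Finset.mem_univ, true_and]
    exact ⟨fun i => w.get i, List.ofFn_get w⟩

lemma sum_wordsLen_zero {M : Type*} [AddCommMonoid M] (g : Word d → M) :
    ∑ w ∈ wordsLen d 0, g w = g [] := by
  have : wordsLen d 0 = {([] : Word d)} := by
    ext w; simp [mem_wordsLen, List.length_eq_zero_iff]
  rw [this, Finset.sum_singleton]

lemma sum_wordsLen_succ {M : Type*} [AddCommMonoid M] (n : ℕ) (g : Word d → M) :
    ∑ w ∈ wordsLen d (n + 1), g w = ∑ z ∈ wordsLen d n, ∑ a : Fin d, g (z ++ [a]) := by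
  have himg : ((wordsLen d n ×ˢ (Finset.univ : Finset (Fin d))).image
      fun p => p.1 ++ [p.2]) = wordsLen d (n + 1) := by
    ext w
    simp only [Finset.mem_image, Finset.mem_product, mem_wordsLen, Finset.mem_univ, and_true]
    constructor
    · rintro ⟨⟨z, a⟩, hz, rfl⟩
      simp [hz]
    · intro hw
      have hne : w ≠ [] := by intro h; rw [h] at hw; simp at hw
      refine ⟨⟨w.dropLast, w.getLast hne⟩, ?_, List.dropLast_append_getLast hne⟩
      simp [List.length_dropLast, hw]
  rw [← himg, Finset.sum_image, Finset.sum_product]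
  rintro ⟨z, a⟩ hz ⟨z', a'⟩ hz' h
  have h1 : z = z' := by
    have := congrArg List.dropLast h
    simpa [List.dropLast_concat] using this
  have h2 : a = a' := by
    have := congrArg (fun l => List.getLast? l) h
    simpa [List.getLast?_concat] using this
  simp [h1, h2]

lemma hom_ext1 {N : Type*} [AddCommGroup N] [Module ℝ N] {f g : Ten d →ₗ[ℝ] N}
    (h : ∀ u : Word d, f (wd u) = g (wd u)) : f = g := by
  refine Finsupp.lhom_ext' fun u => LinearMap.ext_ring ?_
  simpa [wd] using h u

lemma brkL_apply (x y : Ten d) : brkL x y = brk x y := rfl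

lemma concM_assoc (x y z : Ten d) : concM (concM x y) z = concM x (concM y z) := by
  induction x using Finsupp.induction_linear with
  | zero => simp
  | add f g hf hg => simp [map_add, LinearMap.add_apply, hf, hg]
  | single u c =>
    induction y using Finsupp.induction_linear with
    | zero => simp
    | add f g hf hg => simp [map_add, LinearMap.add_apply, hf, hg]
    | single v c' =>
      induction z using Finsupp.induction_linear with
      | zero => simp
      | add f g hf hg => simp [map_add, hf, hg]
      | single w c'' =>
        have hs : ∀ (t : Word d) (r : ℝ), (Finsupp.single t r : Ten d) = r • wd t := by
          intro t r; simp [wd, Finsupp.smul_single]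
        simp only [hs, map_smul, LinearMap.smul_apply, concM_wd, List.append_assoc]

lemma brk_leibniz (x y z : Ten d) :
    brk x (brk y z) = brk (brk x y) z + brk y (brk x z) := by
  simp only [brk, map_sub, LinearMap.sub_apply, concM_assoc]
  abel

def DDr (a : Fin d) : Ten d ⊗[ℝ] Ten d →ₗ[ℝ] Ten d ⊗[ℝ] Ten d :=
  TensorProduct.map (Ra a) LinearMap.id + TensorProduct.map LinearMap.id (Ra a)

def DDl (a : Fin d) : Ten d ⊗[ℝ] Ten d →ₗ[ℝ] Ten d ⊗[ℝ] Ten d :=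
  TensorProduct.map (La a) LinearMap.id + TensorProduct.map LinearMap.id (La a)

def DeltaR : Word d → Ten d ⊗[ℝ] Ten d
  | [] => wd [] ⊗ₜ[ℝ] wd []
  | a :: w => DDr a (DeltaR w)

def Delta (w : Word d) : Ten d ⊗[ℝ] Ten d := DeltaR w.reverse

lemma Delta_nil : Delta ([] : Word d) = wd [] ⊗ₜ[ℝ] wd [] := rfl

lemma Delta_app (z : Word d) (a : Fin d) : Delta (z ++ [a]) = DDr a (Delta z) := by
  rw [Delta, List.reverse_append]
  rfl

lemma Ra_La (a c : Fin d) (x : Ten d) : Ra c (La a x) = La a (Ra c x) := by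
  have h : (Ra c).comp (La a) = (La (d := d) a).comp (Ra c) :=
    hom_ext1 fun w => by simp [Ra_wd, La_wd]
  exact LinearMap.congr_fun h x

lemma DDr_DDl (a c : Fin d) (X : Ten d ⊗[ℝ] Ten d) : DDr c (DDl a X) = DDl a (DDr c X) := by
  induction X using TensorProduct.induction_on with
  | zero => simp
  | tmul x y =>
    simp only [DDr, DDl, LinearMap.add_apply, TensorProduct.map_tmul, LinearMap.id_coe,
      id_eq, map_add, Ra_La]
    rw [add_add_add_comm]
  | add X Y hX hY => simp only [map_add, hX, hY]

lemma Delta_cons (a : Fin d) (z : Word d) : Delta (a :: z) = DDl a (Delta z) := by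
  induction z using List.reverseRecOn with
  | nil =>
    show Delta ([] ++ [a]) = _
    rw [Delta_app, Delta_nil]
    simp [DDr, DDl, Ra_wd, La_wd]
  | append_singleton z c ih =>
    have h : (a :: (z ++ [c])) = (a :: z) ++ [c] := by simp
    rw [h, Delta_app, ih, Delta_app, DDr_DDl]

def epsL : Ten d →ₗ[ℝ] ℝ := Finsupp.lapply []

def epsFst : Ten d ⊗[ℝ] Ten d →ₗ[ℝ] Ten d :=
  TensorProduct.lift ((LinearMap.lsmul ℝ (Ten d)).comp epsL)

lemma epsFst_tmul (x y : Ten d) : epsFst (x ⊗ₜ[ℝ] y) = epsL x • y := rfl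

lemma epsL_wd_nil : epsL (wd ([] : Word d)) = 1 := by simp [epsL, wd]

lemma epsL_wd_cons (a : Fin d) (w : Word d) : epsL (wd (a :: w)) = 0 := by
  simp [epsL, wd, Finsupp.single_apply]

lemma epsL_Ra (a : Fin d) (x : Ten d) : epsL (Ra a x) = 0 := by
  have : (Finsupp.mapDomain (fun w : Word d => w ++ [a]) x) [] = 0 :=
    Finsupp.mapDomain_notin_range _ _ (by simp)
  simpa [epsL, Ra, Finsupp.lmapDomain_apply] using this

lemma epsFst_DDr (a : Fin d) (X : Ten d ⊗[ℝ] Ten d) :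
    epsFst (DDr a X) = Ra a (epsFst X) := by
  induction X using TensorProduct.induction_on with
  | zero => simp
  | tmul x y =>
    simp only [DDr, LinearMap.add_apply, TensorProduct.map_tmul, LinearMap.id_coe, id_eq,
      map_add, epsFst_tmul, epsL_Ra, zero_smul, zero_add, map_smul]
  | add X Y hX hY => simp only [map_add, hX, hY, map_add]

lemma epsFst_Delta (z : Word d) : epsFst (Delta z) = wd z := by
  induction z using List.reverseRecOn with
  | nil => rw [Delta_nil, epsFst_tmul, epsL_wd_nil, one_smul]
  | append_singleton z a ih => rw [Delta_app, epsFst_DDr, ih, Ra_wd]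

lemma brk_zero_left (y : Ten d) : brk 0 y = 0 := by simp [brk]

lemma brk_zero_right (x : Ten d) : brk x 0 = 0 := by simp [brk]

lemma brk_add_left (x x' y : Ten d) : brk (x + x') y = brk x y + brk x' y := by
  simp only [brk, map_add, LinearMap.add_apply]; abel

lemma brk_smul_left (c : ℝ) (x y : Ten d) : brk (c • x) y = c • brk x y := by
  simp only [brk, map_smul, LinearMap.smul_apply, smul_sub]

lemma brk_smul_right (c : ℝ) (x y : Ten d) : brk x (c • y) = c • brk x y := by
  simp only [brk, map_smul, LinearMap.smul_apply, smul_sub]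

lemma rW_nil : rW ([] : Word d) = 0 := rfl

lemma rMap_La (a : Fin d) (x : Ten d) :
    rMap (La a x) = brk (wd [a]) (rMap x) + epsL x • wd [a] := by
  have h : rMap.comp (La a) =
      (brkL (wd [a])).comp rMap + epsL.smulRight (wd ([a] : Word d)) := by
    refine hom_ext1 fun w => ?_
    simp only [LinearMap.comp_apply, LinearMap.add_apply, LinearMap.smulRight_apply,
      La_wd, rMap_wd, brkL_apply]
    cases w with
    | nil => simp [rW_nil, brk_zero_right, epsL_wd_nil, rW]
    | cons j u => rw [rW_cons a (j :: u) (by simp), epsL_wd_cons, zero_smul, add_zero]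
  have := LinearMap.congr_fun h x
  simpa [brkL_apply] using this

def psi (b : Fin d) : Ten d →ₗ[ℝ] Ten d := rMap.comp (Ra b)

lemma psi_wd (b : Fin d) (w : Word d) : psi b (wd w) = rW (w ++ [b]) := by
  simp [psi, Ra_wd, rMap_wd]

lemma psi_La (a b : Fin d) (x : Ten d) : psi b (La a x) = brk (wd [a]) (psi b x) := by
  have h : (psi b).comp (La a) = (brkL (wd [a])).comp (psi b) := by
    refine hom_ext1 fun w => ?_
    simp only [LinearMap.comp_apply, La_wd, psi_wd, brkL_apply]
    rw [← rW_cons a (w ++ [b]) (by simp)]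
    rfl
  have := LinearMap.congr_fun h x
  simpa [brkL_apply] using this

def Bb (b : Fin d) : Ten d →ₗ[ℝ] Ten d →ₗ[ℝ] Ten d := (brkL.comp rMap).compl₂ (psi b)

def Jb (b : Fin d) : Ten d ⊗[ℝ] Ten d →ₗ[ℝ] Ten d := TensorProduct.lift (Bb b)

lemma Jb_tmul (b : Fin d) (x y : Ten d) : Jb b (x ⊗ₜ[ℝ] y) = brk (rMap x) (psi b y) := rfl

lemma Jb_DDl (a b : Fin d) (X : Ten d ⊗[ℝ] Ten d) :
    Jb b (DDl a X) = brk (wd [a]) (Jb b X) + brk (wd [a]) (psi b (epsFst X)) := by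
  induction X using TensorProduct.induction_on with
  | zero => simp [brk_zero_right]
  | tmul x y =>
    simp only [DDl, LinearMap.add_apply, TensorProduct.map_tmul, LinearMap.id_coe, id_eq,
      map_add, Jb_tmul, epsFst_tmul]
    rw [rMap_La, psi_La, brk_add_left, brk_smul_left, map_smul, brk_smul_right]
    rw [brk_leibniz (wd [a]) (rMap x) (psi b y)]
    abel
  | add X Y hX hY =>
    simp only [map_add, hX, hY, brk, LinearMap.add_apply]
    abel

lemma Jb_Delta (b : Fin d) (z : Word d) :
    Jb b (Delta z) = (z.length : ℝ) • rW (z ++ [b]) := by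
  induction z with
  | nil =>
    rw [Delta_nil, Jb_tmul]
    simp [rMap_wd, rW_nil, brk_zero_left]
  | cons a z ih =>
    rw [Delta_cons, Jb_DDl, ih, epsFst_Delta, psi_wd, brk_smul_right,
      ← rW_cons a (z ++ [b]) (by simp)]
    have h : (a :: z) ++ [b] = a :: (z ++ [b]) := rfl
    rw [h, List.length_cons]
    push_cast
    rw [add_smul, one_smul]

def trp (x : Ten d) (u v : Word d) : Ten d ⊗[ℝ] (Ten d ⊗[ℝ] Ten d) :=
  x ⊗ₜ[ℝ] (wd u ⊗ₜ[ℝ] wd v)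

lemma trp_add (x y : Ten d) (u v : Word d) :
    trp (x + y) u v = trp x u v + trp y u v := TensorProduct.add_tmul x y _

def SS (d m : ℕ) : Ten d ⊗[ℝ] (Ten d ⊗[ℝ] Ten d) :=
  ∑ ℓ ∈ Finset.range (m + 1), ∑ u ∈ wordsLen d ℓ, ∑ v ∈ wordsLen d (m - ℓ), trp (shW u v) u v

def CC1 (d m : ℕ) : Ten d ⊗[ℝ] (Ten d ⊗[ℝ] Ten d) :=
  ∑ ℓ ∈ Finset.range m, ∑ u ∈ wordsLen d ℓ, ∑ a : Fin d, ∑ v ∈ wordsLen d (m - 1 - ℓ), ∑ b : Fin d,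
    trp (Ra a (shW u (v ++ [b]))) (u ++ [a]) (v ++ [b])

def CC2 (d m : ℕ) : Ten d ⊗[ℝ] (Ten d ⊗[ℝ] Ten d) :=
  ∑ ℓ ∈ Finset.range m, ∑ u ∈ wordsLen d ℓ, ∑ a : Fin d, ∑ v ∈ wordsLen d (m - 1 - ℓ), ∑ b : Fin d,
    trp (Ra b (shW (u ++ [a]) v)) (u ++ [a]) (v ++ [b])

def QQ1 (d m : ℕ) : Ten d ⊗[ℝ] (Ten d ⊗[ℝ] Ten d) :=
  ∑ u ∈ wordsLen d m, ∑ a : Fin d, trp (wd (u ++ [a])) (u ++ [a]) ([] : Word d)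

def QQ0 (d m : ℕ) : Ten d ⊗[ℝ] (Ten d ⊗[ℝ] Ten d) :=
  ∑ v ∈ wordsLen d m, ∑ b : Fin d, trp (wd (v ++ [b])) ([] : Word d) (v ++ [b])

def MM (a : Fin d) : (Ten d ⊗[ℝ] (Ten d ⊗[ℝ] Ten d)) →ₗ[ℝ] Ten d ⊗[ℝ] (Ten d ⊗[ℝ] Ten d) :=
  TensorProduct.map (Ra a) (DDr a)

lemma hL_duality (m : ℕ) : SS d (m + 1) = (CC1 d m + CC2 d m) + QQ1 d m + QQ0 d m := by
  rw [SS, Finset.sum_range_succ']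
  simp only [Nat.add_sub_add_right, Nat.sub_zero]
  have h0 : (∑ u ∈ wordsLen d 0, ∑ v ∈ wordsLen d (m + 1), trp (shW u v) u v) = QQ0 d m := by
    rw [sum_wordsLen_zero (fun u => ∑ v ∈ wordsLen d (m + 1), trp (shW u v) u v),
      sum_wordsLen_succ m, QQ0]
    refine Finset.sum_congr rfl fun v _ => Finset.sum_congr rfl fun b _ => ?_
    rw [shW_nil_left]
  have h1 : (∑ ℓ ∈ Finset.range (m + 1), ∑ u ∈ wordsLen d (ℓ + 1), ∑ v ∈ wordsLen d (m - ℓ),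
      trp (shW u v) u v) = (CC1 d m + CC2 d m) + QQ1 d m := by
    rw [Finset.sum_range_succ]
    congr 1
    · rw [CC1, CC2, ← Finset.sum_add_distrib]
      refine Finset.sum_congr rfl fun ℓ hℓ => ?_
      have hlm : ℓ < m := Finset.mem_range.mp hℓ
      rw [← Finset.sum_add_distrib, sum_wordsLen_succ ℓ]
      refine Finset.sum_congr rfl fun u _ => ?_
      rw [← Finset.sum_add_distrib]
      refine Finset.sum_congr rfl fun a _ => ?_
      have hv : m - ℓ = (m - 1 - ℓ) + 1 := by omega
      rw [hv, sum_wordsLen_succ, ← Finset.sum_add_distrib]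
      refine Finset.sum_congr rfl fun v _ => ?_
      rw [← Finset.sum_add_distrib]
      refine Finset.sum_congr rfl fun b _ => ?_
      rw [shW_app_app, trp_add]
    · simp only [Nat.sub_self]
      rw [sum_wordsLen_succ m, QQ1]
      refine Finset.sum_congr rfl fun u _ => Finset.sum_congr rfl fun a _ => ?_
      rw [sum_wordsLen_zero (fun v => trp (shW (u ++ [a]) v) (u ++ [a]) v), shW_nil_right]
  rw [h0, h1]

set_option maxHeartbeats 2000000 in
lemma hR_duality (m : ℕ) (ih : SS d m = ∑ z ∈ wordsLen d m, wd z ⊗ₜ[ℝ] Delta z) :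
    (∑ z ∈ wordsLen d (m + 1), wd z ⊗ₜ[ℝ] Delta z) = (CC1 d m + CC2 d m) + QQ1 d m + QQ0 d m := by
  have key : (∑ z ∈ wordsLen d (m + 1), wd z ⊗ₜ[ℝ] Delta z)
      = ∑ a : Fin d, ∑ ℓ ∈ Finset.range (m + 1), ∑ u ∈ wordsLen d ℓ, ∑ v ∈ wordsLen d (m - ℓ),
          (trp (Ra a (shW u v)) (u ++ [a]) v + trp (Ra a (shW u v)) u (v ++ [a])) := by
    rw [sum_wordsLen_succ m]
    have step1 : ∀ z ∈ wordsLen d m, (∑ a : Fin d, wd (z ++ [a]) ⊗ₜ[ℝ] Delta (z ++ [a]))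
        = ∑ a : Fin d, MM a (wd z ⊗ₜ[ℝ] Delta z) := by
      intro z _
      refine Finset.sum_congr rfl fun a _ => ?_
      rw [Delta_app, MM, TensorProduct.map_tmul, Ra_wd]
    rw [Finset.sum_congr rfl step1, Finset.sum_comm]
    refine Finset.sum_congr rfl fun a _ => ?_
    rw [← map_sum, ← ih, SS, map_sum]
    refine Finset.sum_congr rfl fun ℓ _ => ?_
    rw [map_sum]
    refine Finset.sum_congr rfl fun u _ => ?_
    rw [map_sum]
    refine Finset.sum_congr rfl fun v _ => ?_
    simp only [MM, trp, TensorProduct.map_tmul, DDr, LinearMap.add_apply, LinearMap.id_coe,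
      id_eq, Ra_wd]
    rw [TensorProduct.tmul_add]
  rw [key]
  have split : (∑ a : Fin d, ∑ ℓ ∈ Finset.range (m + 1), ∑ u ∈ wordsLen d ℓ,
        ∑ v ∈ wordsLen d (m - ℓ),
        (trp (Ra a (shW u v)) (u ++ [a]) v + trp (Ra a (shW u v)) u (v ++ [a])))
      = (∑ a : Fin d, ∑ ℓ ∈ Finset.range (m + 1), ∑ u ∈ wordsLen d ℓ,
          ∑ v ∈ wordsLen d (m - ℓ), trp (Ra a (shW u v)) (u ++ [a]) v)
      + (∑ a : Fin d, ∑ ℓ ∈ Finset.range (m + 1), ∑ u ∈ wordsLen d ℓ,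
          ∑ v ∈ wordsLen d (m - ℓ), trp (Ra a (shW u v)) u (v ++ [a])) := by
    simp only [Finset.sum_add_distrib]
  rw [split]
  have hE : (∑ a : Fin d, ∑ ℓ ∈ Finset.range (m + 1), ∑ u ∈ wordsLen d ℓ,
      ∑ v ∈ wordsLen d (m - ℓ), trp (Ra a (shW u v)) (u ++ [a]) v) = CC1 d m + QQ1 d m := by
    calc (∑ a : Fin d, ∑ ℓ ∈ Finset.range (m + 1), ∑ u ∈ wordsLen d ℓ,
        ∑ v ∈ wordsLen d (m - ℓ), trp (Ra a (shW u v)) (u ++ [a]) v)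
        = ∑ ℓ ∈ Finset.range (m + 1), ∑ a : Fin d, ∑ u ∈ wordsLen d ℓ,
            ∑ v ∈ wordsLen d (m - ℓ), trp (Ra a (shW u v)) (u ++ [a]) v := Finset.sum_comm
      _ = ∑ ℓ ∈ Finset.range (m + 1), ∑ u ∈ wordsLen d ℓ, ∑ a : Fin d,
            ∑ v ∈ wordsLen d (m - ℓ), trp (Ra a (shW u v)) (u ++ [a]) v :=
          Finset.sum_congr rfl fun ℓ _ => Finset.sum_comm
      _ = CC1 d m + QQ1 d m := by
          rw [Finset.sum_range_succ]
          congr 1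
          · rw [CC1]
            refine Finset.sum_congr rfl fun ℓ hℓ => ?_
            have hlm : ℓ < m := Finset.mem_range.mp hℓ
            refine Finset.sum_congr rfl fun u _ => Finset.sum_congr rfl fun a _ => ?_
            have hv : m - ℓ = (m - 1 - ℓ) + 1 := by omega
            rw [hv, sum_wordsLen_succ]
          · simp only [Nat.sub_self]
            rw [QQ1]
            refine Finset.sum_congr rfl fun u _ => Finset.sum_congr rfl fun a _ => ?_
            rw [sum_wordsLen_zero (fun v => trp (Ra a (shW u v)) (u ++ [a]) v),
              shW_nil_right, Ra_wd]
  have hF : (∑ a : Fin d, ∑ ℓ ∈ Finset.range (m + 1), ∑ u ∈ wordsLen d ℓ,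
      ∑ v ∈ wordsLen d (m - ℓ), trp (Ra a (shW u v)) u (v ++ [a])) = CC2 d m + QQ0 d m := by
    have perb : ∀ b : Fin d,
        (∑ ℓ ∈ Finset.range (m + 1), ∑ u ∈ wordsLen d ℓ, ∑ v ∈ wordsLen d (m - ℓ),
          trp (Ra b (shW u v)) u (v ++ [b]))
        = (∑ ℓ ∈ Finset.range m, ∑ u ∈ wordsLen d ℓ, ∑ a : Fin d,
            ∑ v ∈ wordsLen d (m - 1 - ℓ), trp (Ra b (shW (u ++ [a]) v)) (u ++ [a]) (v ++ [b]))
          + ∑ v ∈ wordsLen d m, trp (wd (v ++ [b])) ([] : Word d) (v ++ [b]) := by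
      intro b
      rw [Finset.sum_range_succ']
      simp only [Nat.add_sub_add_right, Nat.sub_zero]
      congr 1
      · refine Finset.sum_congr rfl fun ℓ hℓ => ?_
        rw [sum_wordsLen_succ ℓ]
        refine Finset.sum_congr rfl fun u _ => Finset.sum_congr rfl fun a _ => ?_
        have hv : m - (ℓ + 1) = m - 1 - ℓ := by omega
        rw [hv]
      · rw [sum_wordsLen_zero (fun u => ∑ v ∈ wordsLen d m, trp (Ra b (shW u v)) u (v ++ [b]))]
        refine Finset.sum_congr rfl fun v _ => ?_
        rw [shW_nil_left, Ra_wd]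
    rw [Finset.sum_congr rfl (fun b _ => perb b), Finset.sum_add_distrib]
    congr 1
    · calc (∑ b : Fin d, ∑ ℓ ∈ Finset.range m, ∑ u ∈ wordsLen d ℓ, ∑ a : Fin d,
            ∑ v ∈ wordsLen d (m - 1 - ℓ), trp (Ra b (shW (u ++ [a]) v)) (u ++ [a]) (v ++ [b]))
          = ∑ ℓ ∈ Finset.range m, ∑ b : Fin d, ∑ u ∈ wordsLen d ℓ, ∑ a : Fin d,
            ∑ v ∈ wordsLen d (m - 1 - ℓ), trp (Ra b (shW (u ++ [a]) v)) (u ++ [a]) (v ++ [b]) :=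
            Finset.sum_comm
        _ = ∑ ℓ ∈ Finset.range m, ∑ u ∈ wordsLen d ℓ, ∑ b : Fin d, ∑ a : Fin d,
            ∑ v ∈ wordsLen d (m - 1 - ℓ), trp (Ra b (shW (u ++ [a]) v)) (u ++ [a]) (v ++ [b]) :=
            Finset.sum_congr rfl fun ℓ _ => Finset.sum_comm
        _ = ∑ ℓ ∈ Finset.range m, ∑ u ∈ wordsLen d ℓ, ∑ a : Fin d, ∑ b : Fin d,
            ∑ v ∈ wordsLen d (m - 1 - ℓ), trp (Ra b (shW (u ++ [a]) v)) (u ++ [a]) (v ++ [b]) :=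
            Finset.sum_congr rfl fun ℓ _ => Finset.sum_congr rfl fun u _ => Finset.sum_comm
        _ = ∑ ℓ ∈ Finset.range m, ∑ u ∈ wordsLen d ℓ, ∑ a : Fin d,
            ∑ v ∈ wordsLen d (m - 1 - ℓ), ∑ b : Fin d,
            trp (Ra b (shW (u ++ [a]) v)) (u ++ [a]) (v ++ [b]) :=
            Finset.sum_congr rfl fun ℓ _ => Finset.sum_congr rfl fun u _ =>
              Finset.sum_congr rfl fun a _ => Finset.sum_comm
        _ = CC2 d m := rfl
    · calc (∑ b : Fin d, ∑ v ∈ wordsLen d m, trp (wd (v ++ [b])) ([] : Word d) (v ++ [b]))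
          = ∑ v ∈ wordsLen d m, ∑ b : Fin d, trp (wd (v ++ [b])) ([] : Word d) (v ++ [b]) :=
            Finset.sum_comm
        _ = QQ0 d m := rfl
  rw [hE, hF]
  abel

lemma duality (m : ℕ) : SS d m = ∑ z ∈ wordsLen d m, wd z ⊗ₜ[ℝ] Delta z := by
  induction m with
  | zero =>
    rw [SS, Finset.sum_range_one, sum_wordsLen_zero, sum_wordsLen_zero, sum_wordsLen_zero,
      Delta_nil, trp, shW_nil_left]
  | succ m ih => rw [hL_duality m, hR_duality m ih]

lemma top2_tmul (f g : Ten d →ₗ[ℝ] Ten d →ₗ[ℝ] Ten d) (p q p' q' : Ten d) :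
    top2 f g (p ⊗ₜ[ℝ] q) (p' ⊗ₜ[ℝ] q') = f p p' ⊗ₜ[ℝ] g q q' := by
  simp [top2, TensorProduct.mapBilinear_apply]

lemma halfSh_wd (u v : Word d) : halfSh (wd u) (wd v) = hsW u v := lift2_wd hsW u v

lemma brkL_neg_swap (q q' : Ten d) : brkL q' q = - brkL q q' := by
  simp only [brkL, LinearMap.sub_apply, LinearMap.flip_apply, neg_sub]

lemma ropSym_eq (x y : Ten d ⊗[ℝ] Ten d) : ropSym x y = rop x y + rop y x := by
  induction x using TensorProduct.induction_on with
  | zero => simp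
  | tmul p q =>
    induction y using TensorProduct.induction_on with
    | zero => simp
    | tmul p' q' =>
      rw [ropSym, rop, top2_tmul, top2_tmul, top2_tmul]
      have h1 : areaL p p' = halfSh p p' - halfSh p' p := rfl
      have h2 : brkL q' q = - brkL q q' := brkL_neg_swap q q'
      rw [h1, h2, TensorProduct.sub_tmul, TensorProduct.tmul_neg]
      exact sub_eq_add_neg _ _
    | add y₁ y₂ h₁ h₂ =>
      simp only [map_add, LinearMap.add_apply, h₁, h₂]
      rw [add_add_add_comm]
  | add x₁ x₂ h₁ h₂ =>
    simp only [map_add, LinearMap.add_apply, h₁, h₂]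
    rw [add_add_add_comm]

lemma rop_Rtens (ℓ k : ℕ) :
    rop (Rtens d ℓ) (Rtens d k) = ∑ u ∈ wordsLen d ℓ, ∑ v ∈ wordsLen d k,
      hsW u v ⊗ₜ[ℝ] brk (rW u) (rW v) := by
  rw [Rtens, Rtens, map_sum]
  rw [show (∑ v ∈ wordsLen d k, rop (∑ u ∈ wordsLen d ℓ, wd u ⊗ₜ[ℝ] rW u) (wd v ⊗ₜ[ℝ] rW v))
      = ∑ v ∈ wordsLen d k, ∑ u ∈ wordsLen d ℓ, rop (wd u ⊗ₜ[ℝ] rW u) (wd v ⊗ₜ[ℝ] rW v) from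
    Finset.sum_congr rfl fun v _ => by rw [map_sum, LinearMap.sum_apply], Finset.sum_comm]
  refine Finset.sum_congr rfl fun u _ => Finset.sum_congr rfl fun v _ => ?_
  rw [rop, top2_tmul, halfSh_wd, brkL_apply]

def RJ (b : Fin d) : (Ten d ⊗[ℝ] (Ten d ⊗[ℝ] Ten d)) →ₗ[ℝ] Ten d ⊗[ℝ] Ten d :=
  TensorProduct.map (Ra b) (Jb b)

set_option maxHeartbeats 1000000 in
lemma G_eq (m : ℕ) :
    (∑ ℓ ∈ Finset.Icc 1 m, rop (Rtens d ℓ) (Rtens d (m + 1 - ℓ)))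
      = (m : ℝ) • Rtens d (m + 1) := by
  have hrange : Finset.range (m + 1) = insert 0 (Finset.Icc 1 m) := by
    ext x; simp only [Finset.mem_range, Finset.mem_insert, Finset.mem_Icc]; omega
  have h0 : rop (Rtens d 0) (Rtens d (m + 1 - 0)) = (0 : Ten d) ⊗ₜ[ℝ] (0 : Ten d) := by
    rw [TensorProduct.zero_tmul, rop_Rtens, sum_wordsLen_zero
      (fun u => ∑ v ∈ wordsLen d (m + 1 - 0), hsW u v ⊗ₜ[ℝ] brk (rW u) (rW v))]
    exact Finset.sum_eq_zero fun v _ => by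
      rw [rW_nil, brk_zero_left, TensorProduct.tmul_zero]
  have hext : (∑ ℓ ∈ Finset.Icc 1 m, rop (Rtens d ℓ) (Rtens d (m + 1 - ℓ)))
      = ∑ ℓ ∈ Finset.range (m + 1), rop (Rtens d ℓ) (Rtens d (m + 1 - ℓ)) := by
    rw [hrange, Finset.sum_insert (by simp), h0, TensorProduct.zero_tmul, zero_add]
  rw [hext]
  calc (∑ ℓ ∈ Finset.range (m + 1), rop (Rtens d ℓ) (Rtens d (m + 1 - ℓ)))
      = ∑ ℓ ∈ Finset.range (m + 1), ∑ u ∈ wordsLen d ℓ, ∑ v ∈ wordsLen d (m + 1 - ℓ),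
          hsW u v ⊗ₜ[ℝ] brk (rW u) (rW v) :=
        Finset.sum_congr rfl fun ℓ _ => rop_Rtens ℓ (m + 1 - ℓ)
    _ = ∑ ℓ ∈ Finset.range (m + 1), ∑ u ∈ wordsLen d ℓ, ∑ v ∈ wordsLen d (m - ℓ), ∑ b : Fin d,
          RJ b (trp (shW u v) u v) := by
        refine Finset.sum_congr rfl fun ℓ hℓ => Finset.sum_congr rfl fun u hu => ?_
        have h1 : m + 1 - ℓ = (m - ℓ) + 1 := by
          have := Finset.mem_range.mp hℓ; omega
        rw [h1, sum_wordsLen_succ (m - ℓ)]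
        refine Finset.sum_congr rfl fun v _ => Finset.sum_congr rfl fun b _ => ?_
        rw [hsW_app, RJ, trp, TensorProduct.map_tmul, Jb_tmul, rMap_wd, psi_wd]
    _ = ∑ ℓ ∈ Finset.range (m + 1), ∑ u ∈ wordsLen d ℓ, ∑ b : Fin d, ∑ v ∈ wordsLen d (m - ℓ),
          RJ b (trp (shW u v) u v) :=
        Finset.sum_congr rfl fun ℓ _ => Finset.sum_congr rfl fun u _ => Finset.sum_comm
    _ = ∑ ℓ ∈ Finset.range (m + 1), ∑ b : Fin d, ∑ u ∈ wordsLen d ℓ, ∑ v ∈ wordsLen d (m - ℓ),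
          RJ b (trp (shW u v) u v) :=
        Finset.sum_congr rfl fun ℓ _ => Finset.sum_comm
    _ = ∑ b : Fin d, ∑ ℓ ∈ Finset.range (m + 1), ∑ u ∈ wordsLen d ℓ, ∑ v ∈ wordsLen d (m - ℓ),
          RJ b (trp (shW u v) u v) := Finset.sum_comm
    _ = ∑ b : Fin d, RJ b (SS d m) := by
        refine Finset.sum_congr rfl fun b _ => ?_
        rw [SS, map_sum]
        refine Finset.sum_congr rfl fun ℓ _ => ?_
        rw [map_sum]
        refine Finset.sum_congr rfl fun u _ => ?_
        rw [map_sum]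
    _ = ∑ b : Fin d, ∑ z ∈ wordsLen d m, wd (z ++ [b]) ⊗ₜ[ℝ] ((m : ℝ) • rW (z ++ [b])) := by
        refine Finset.sum_congr rfl fun b _ => ?_
        rw [duality, map_sum]
        refine Finset.sum_congr rfl fun z hz => ?_
        rw [RJ, TensorProduct.map_tmul, Ra_wd, Jb_Delta, mem_wordsLen.mp hz]
    _ = ∑ z ∈ wordsLen d m, ∑ b : Fin d, (m : ℝ) • (wd (z ++ [b]) ⊗ₜ[ℝ] rW (z ++ [b])) := by
        rw [Finset.sum_comm]
        exact Finset.sum_congr rfl fun z _ => Finset.sum_congr rfl fun b _ =>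
          TensorProduct.tmul_smul _ _ _
    _ = (m : ℝ) • Rtens d (m + 1) := by
        rw [Rtens, sum_wordsLen_succ m, Finset.smul_sum]
        exact Finset.sum_congr rfl fun z _ => (Finset.smul_sum).symm

lemma mem_frakR_letters (i : Fin d) : (wd [i] ⊗ₜ[ℝ] wd [i]) ∈ frakR d :=
  Submodule.mem_sInf.mpr fun p hp => hp.1 i

lemma ropSym_mem {x y : Ten d ⊗[ℝ] Ten d} (hx : x ∈ frakR d) (hy : y ∈ frakR d) :
    ropSym x y ∈ frakR d :=
  Submodule.mem_sInf.mpr fun p hp =>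
    hp.2 x (Submodule.mem_sInf.mp hx p hp) y (Submodule.mem_sInf.mp hy p hp)

lemma part1_lemma (n : ℕ) (hn : 2 ≤ n) :
    ((n : ℝ) - 1) • Rtens d n =
      (1 / 2 : ℝ) • ∑ ℓ ∈ Finset.Icc 1 (n - 1), ropSym (Rtens d ℓ) (Rtens d (n - ℓ)) := by
  obtain ⟨m, rfl⟩ : ∃ m, n = m + 1 := ⟨n - 1, by omega⟩
  have hm1 : m + 1 - 1 = m := by omega
  rw [hm1]
  have hsym : ∀ ℓ ∈ Finset.Icc 1 m, ropSym (Rtens d ℓ) (Rtens d (m + 1 - ℓ))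
      = rop (Rtens d ℓ) (Rtens d (m + 1 - ℓ)) + rop (Rtens d (m + 1 - ℓ)) (Rtens d ℓ) :=
    fun ℓ _ => ropSym_eq _ _
  have hswap : (∑ ℓ ∈ Finset.Icc 1 m, rop (Rtens d (m + 1 - ℓ)) (Rtens d ℓ))
      = ∑ ℓ ∈ Finset.Icc 1 m, rop (Rtens d ℓ) (Rtens d (m + 1 - ℓ)) := by
    refine Finset.sum_nbij' (i := fun ℓ => m + 1 - ℓ) (j := fun ℓ => m + 1 - ℓ)
      ?_ ?_ ?_ ?_ ?_
    · intro ℓ hℓ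
      rw [Finset.mem_Icc] at hℓ
      show m + 1 - ℓ ∈ Finset.Icc 1 m
      rw [Finset.mem_Icc]
      omega
    · intro ℓ hℓ
      rw [Finset.mem_Icc] at hℓ
      show m + 1 - ℓ ∈ Finset.Icc 1 m
      rw [Finset.mem_Icc]
      omega
    · intro ℓ hℓ
      rw [Finset.mem_Icc] at hℓ
      show m + 1 - (m + 1 - ℓ) = ℓ
      omega
    · intro ℓ hℓ
      rw [Finset.mem_Icc] at hℓ
      show m + 1 - (m + 1 - ℓ) = ℓ
      omega
    · intro ℓ hℓ
      rw [Finset.mem_Icc] at hℓ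
      show rop (Rtens d (m + 1 - ℓ)) (Rtens d ℓ)
          = rop (Rtens d (m + 1 - ℓ)) (Rtens d (m + 1 - (m + 1 - ℓ)))
      have h2 : m + 1 - (m + 1 - ℓ) = ℓ := by omega
      rw [h2]
  rw [Finset.sum_congr rfl hsym, Finset.sum_add_distrib, hswap, G_eq]
  have h3 : ((m : ℝ) • Rtens d (m + 1)) + ((m : ℝ) • Rtens d (m + 1))
      = (2 : ℝ) • ((m : ℝ) • Rtens d (m + 1)) := (two_smul ℝ _).symm
  rw [h3, smul_smul]
  have h4 : ((↑(m + 1) : ℝ) - 1) = (m : ℝ) := by push_cast; ring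
  rw [h4]
  norm_num

lemma Rtens_one_mem : Rtens d 1 ∈ frakR d := by
  have h : Rtens d 1 = ∑ a : Fin d, wd [a] ⊗ₜ[ℝ] wd [a] := by
    have h1 : wordsLen d 1 = wordsLen d (0 + 1) := rfl
    rw [Rtens, h1, sum_wordsLen_succ 0, sum_wordsLen_zero
      (fun z => ∑ a : Fin d, wd (z ++ [a]) ⊗ₜ[ℝ] rW (z ++ [a]))]
    refine Finset.sum_congr rfl fun a _ => ?_
    rw [List.nil_append]
    rfl
  rw [h]
  exact Submodule.sum_mem _ fun a _ => mem_frakR_letters a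

end AuxLemmas

/-- For every `n ≥ 2`, `(n−1)·R_n = (1/2)·Σ_{ℓ=1}^{n−1} R_ℓ ▷_Sym R_{n−ℓ}`; consequently
every `R_n` (for `n ≥ 1`) lies in the smallest subspace of `T ⊗ T` containing the
`i ⊗ i` and closed under `▷_Sym`. -/
theorem R_symmetrized_recursion (d : ℕ) (hd : 1 ≤ d) :
    (∀ n : ℕ, 2 ≤ n →
      ((n : ℝ) - 1) • Rtens d n =
        (1 / 2 : ℝ) • ∑ ℓ ∈ Finset.Icc 1 (n - 1), ropSym (Rtens d ℓ) (Rtens d (n - ℓ))) ∧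
    (∀ n : ℕ, 1 ≤ n → Rtens d n ∈ frakR d) := by
  constructor
  · intro n hn
    exact part1_lemma n hn
  · intro n
    induction n using Nat.strong_induction_on with
    | _ n IH =>
      intro hn
      rcases Nat.lt_or_ge n 2 with h2 | h2
      · have h1 : n = 1 := by omega
        subst h1
        exact Rtens_one_mem
      · have hne : ((n : ℝ) - 1) ≠ 0 := by
          have hcast : (2 : ℝ) ≤ (n : ℝ) := by exact_mod_cast h2
          intro hc
          rw [sub_eq_zero] at hc
          rw [hc] at hcast
          norm_num at hcast
        have key := part1_lemma (d := d) n h2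
        have hR : Rtens d n = ((n : ℝ) - 1)⁻¹ • ((1 / 2 : ℝ) •
            ∑ ℓ ∈ Finset.Icc 1 (n - 1), ropSym (Rtens d ℓ) (Rtens d (n - ℓ))) := by
          rw [← key, smul_smul, inv_mul_cancel₀ hne, one_smul]
        rw [hR]
        refine Submodule.smul_mem _ _ (Submodule.smul_mem _ _ (Submodule.sum_mem _ ?_))
        intro ℓ hℓ
        rw [Finset.mem_Icc] at hℓ
        exact ropSym_mem (IH ℓ (by omega) (by omega)) (IH (n - ℓ) (by omega) (by omega))

end
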